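/- arXiv:2310.05904 — 2 statements merged into one kernel-verified Lean document; each statement's English description precedes it below -/
import Mathlib

section
/- Let A be an m×m real symmetric matrix, C an ℓ×ℓ real symmetric positive definite matrix, B an m×ℓ real matrix, and let ρ, ξ_L, ξ_H be real numbers with ξ_L² < λ_min(C). Then, in the Loewner order, A + ξ_H²·I − ρ²·B·(C + ξ_L²·I)⁻¹·Bᵀ ⪯ A + ξ_H²·I − ρ²·B·C⁻¹·Bᵀ + ρ²·ξ_L²·B·C⁻²·Bᵀ. (This is the matrix content of the bound on the conditional covariance of a noisy AR-1 Gaussian process, where A = ρ²·k_L(X_H,X_H) + k_δ(X_H,X_H), B = k_L(X_H,X_L), and C = k_L(X_L,X_L).) -/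
/-!
Writing `D = C + ξ_L² I`, the resolvent identity `C⁻¹ - D⁻¹ = ξ_L² C⁻¹ D⁻¹ = ξ_L² D⁻¹ C⁻¹`
shows that the difference of the two sides is `ρ² ξ_L⁴ (B C⁻¹) D⁻¹ (B C⁻¹)ᵀ`, a congruence
transform of the positive definite matrix `D⁻¹`.
-/

open Matrix

namespace Matrix

variable {n : Type*} [Fintype n] [DecidableEq n]

theorem inv_add_smul_one_sub_inv_add_smul_inv_mul_inv {α : Type*} [Field α]
    {C : Matrix n n α} {s : α} (hC : IsUnit C) (hCs : IsUnit (C + s • 1)) :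
    (C + s • 1)⁻¹ - C⁻¹ + s • (C⁻¹ * C⁻¹) = s • s • (C⁻¹ * (C + s • 1)⁻¹ * C⁻¹) := by
  have hunits : IsUnit C ↔ IsUnit (C + s • 1) := iff_of_true hC hCs
  have h₁ : C⁻¹ - (C + s • 1)⁻¹ = s • (C⁻¹ * (C + s • 1)⁻¹) := by
    rw [inv_sub_inv hunits, add_sub_cancel_left, Matrix.mul_smul, Matrix.mul_one,
      Matrix.smul_mul]
  have h₂ : C⁻¹ - (C + s • 1)⁻¹ = s • ((C + s • 1)⁻¹ * C⁻¹) := by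
    rw [← neg_sub, inv_sub_inv hunits.symm, sub_add_cancel_left, Matrix.mul_neg,
      Matrix.neg_mul, neg_neg, Matrix.mul_smul, Matrix.smul_mul, Matrix.mul_one]
  calc (C + s • 1)⁻¹ - C⁻¹ + s • (C⁻¹ * C⁻¹)
      = s • (C⁻¹ * (C⁻¹ - (C + s • 1)⁻¹)) := by
        rw [Matrix.mul_sub, smul_sub, ← Matrix.mul_smul, ← h₁]
        abel
    _ = s • s • (C⁻¹ * (C + s • 1)⁻¹ * C⁻¹) := by
        rw [h₂, Matrix.mul_smul, Matrix.mul_assoc]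

variable {K : Type*} [Field K] [PartialOrder K] [StarRing K] [StarOrderedRing K]

theorem PosDef.posSemidef_inv_add_smul_one_sub_inv_add_smul_inv_mul_inv {C : Matrix n n K}
    (hC : C.PosDef) {s : K} (hs : 0 ≤ s) :
    ((C + s • 1)⁻¹ - C⁻¹ + s • (C⁻¹ * C⁻¹)).PosSemidef := by
  have hCs : (C + s • 1).PosDef := hC.add_posSemidef (PosSemidef.one.smul hs)
  rw [inv_add_smul_one_sub_inv_add_smul_inv_mul_inv hC.isUnit hCs.isUnit]
  have hcongr := hCs.inv.posSemidef.mul_mul_conjTranspose_same C⁻¹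
  rw [hC.inv.isHermitian.eq] at hcongr
  exact (hcongr.smul hs).smul hs

end Matrix

theorem stmt_5_general {m ℓ : ℕ} (A : Matrix (Fin m) (Fin m) ℝ)
    (C : Matrix (Fin ℓ) (Fin ℓ) ℝ) (hC : C.PosDef)
    (B : Matrix (Fin m) (Fin ℓ) ℝ) (ρ ξL ξH : ℝ) :
    ((A + ξH ^ 2 • (1 : Matrix (Fin m) (Fin m) ℝ) - ρ ^ 2 • (B * C⁻¹ * Bᵀ)
        + ρ ^ 2 • ξL ^ 2 • (B * (C⁻¹ * C⁻¹) * Bᵀ))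
      - (A + ξH ^ 2 • (1 : Matrix (Fin m) (Fin m) ℝ)
        - ρ ^ 2 • (B * (C + ξL ^ 2 • (1 : Matrix (Fin ℓ) (Fin ℓ) ℝ))⁻¹ * Bᵀ))).PosSemidef := by
  have hR := hC.posSemidef_inv_add_smul_one_sub_inv_add_smul_inv_mul_inv (sq_nonneg ξL)
  convert (hR.mul_mul_conjTranspose_same B).smul (sq_nonneg ρ) using 1
  · rfl
  · simp only [conjTranspose_eq_transpose_of_trivial, Matrix.mul_add, Matrix.add_mul,
      Matrix.mul_sub, Matrix.sub_mul, Matrix.mul_smul, Matrix.smul_mul, smul_add, smul_sub]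
    abel

/-- **Conditional covariance bound for a noisy AR-1 GP (matrix content).**
Let `A` be an `m × m` real symmetric matrix, `C` an `ℓ × ℓ` real symmetric positive
definite matrix, `B` an `m × ℓ` real matrix, and `ρ, ξ_L, ξ_H` real numbers with
`ξ_L² < λ_min(C)`.  Then, in the Loewner order,
`A + ξ_H²·I − ρ²·B·(C + ξ_L²·I)⁻¹·Bᵀ ⪯ A + ξ_H²·I − ρ²·B·C⁻¹·Bᵀ + ρ²·ξ_L²·B·C⁻²·Bᵀ`. -/
theorem stmt_5 {m ℓ : ℕ} (A : Matrix (Fin m) (Fin m) ℝ) (hA : A.IsSymm)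
    (C : Matrix (Fin ℓ) (Fin ℓ) ℝ) (hC : C.PosDef)
    (B : Matrix (Fin m) (Fin ℓ) ℝ) (ρ ξL ξH : ℝ)
    (hξL : ∀ i, ξL ^ 2 < hC.1.eigenvalues i) :
    ((A + ξH ^ 2 • (1 : Matrix (Fin m) (Fin m) ℝ) - ρ ^ 2 • (B * C⁻¹ * Bᵀ)
        + ρ ^ 2 • ξL ^ 2 • (B * (C⁻¹ * C⁻¹) * Bᵀ))
      - (A + ξH ^ 2 • (1 : Matrix (Fin m) (Fin m) ℝ)
        - ρ ^ 2 • (B * (C + ξL ^ 2 • (1 : Matrix (Fin ℓ) (Fin ℓ) ℝ))⁻¹ * Bᵀ))).PosSemidef :=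
  stmt_5_general A C hC B ρ ξL ξH
end

section
/- Let ξ > 0 and v > 0 be real numbers. Then for every real s with 0 ≤ s² ≤ v², one has s² ≤ (v² / log(1 + v²·ξ⁻²)) · log(1 + s²·ξ⁻²). (This scalar inequality, with v² the prior variance of the Gaussian process and ξ² the observation-noise variance, is what allows the sum of squared posterior standard deviations in the UCB regret analysis to be bounded by the information gain, producing the constant C₁ = 8·v²/log(1 + v²·ξ⁻²) in the regret bound R_T ≤ √(C₁·T·β_T·γ̃_T).) -/
/-!
The function `x ↦ log (1 + x) / x` is antitone on `(0, ∞)`, which by Bernoulli's inequality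
`1 + p x ≤ (1 + x) ^ p` for `p ≥ 1` amounts to `log (1 + p x) ≤ p log (1 + x)`. Applied to
`x = s² ξ⁻²` and `p = v² / s²` this is the claim once the positive factor `log (1 + v² ξ⁻²)` is
cleared.
-/

open Real

lemma mul_log_one_add_le_mul_log_one_add {a b : ℝ} (ha : 0 ≤ a) (hab : a ≤ b) :
    a * log (1 + b) ≤ b * log (1 + a) := by
  rcases ha.eq_or_lt with rfl | ha
  · simp
  have hp : 1 ≤ b / a := (one_le_div ha).mpr hab
  have bernoulli : 1 + b ≤ (1 + a) ^ (b / a) := by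
    simpa [div_mul_cancel₀ b ha.ne'] using
      one_add_mul_self_le_rpow_one_add (by linarith : (-1 : ℝ) ≤ a) hp
  have hlog : log (1 + b) ≤ b / a * log (1 + a) := by
    calc log (1 + b) ≤ log ((1 + a) ^ (b / a)) := log_le_log (by linarith) bernoulli
      _ = b / a * log (1 + a) := log_rpow (by linarith) _
  calc a * log (1 + b) ≤ a * (b / a * log (1 + a)) := mul_le_mul_of_nonneg_left hlog ha.le
    _ = b * log (1 + a) := by field_simp

/-- **Scalar inequality behind the constant `C₁` in the UCB regret bound.**
Let `ξ > 0` and `v > 0`.  Then for every real `s` with `0 ≤ s² ≤ v²`,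
`s² ≤ (v² / log(1 + v²·ξ⁻²)) · log(1 + s²·ξ⁻²)`. -/
theorem stmt_10 (ξ v : ℝ) (hξ : 0 < ξ) (hv : 0 < v) :
    ∀ s : ℝ, 0 ≤ s ^ 2 → s ^ 2 ≤ v ^ 2 →
      s ^ 2 ≤ (v ^ 2 / Real.log (1 + v ^ 2 * (ξ ^ 2)⁻¹))
                * Real.log (1 + s ^ 2 * (ξ ^ 2)⁻¹) := by
  intro s hs hsv
  have hc : 0 < (ξ ^ 2)⁻¹ := by positivity
  have hlog_pos : 0 < log (1 + v ^ 2 * (ξ ^ 2)⁻¹) :=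
    log_pos (lt_add_of_pos_right 1 (by positivity))
  have key := mul_log_one_add_le_mul_log_one_add (mul_nonneg hs hc.le)
    (mul_le_mul_of_nonneg_right hsv hc.le)
  rw [div_mul_eq_mul_div, le_div_iff₀ hlog_pos]
  exact le_of_mul_le_mul_right (by linarith [key]) hc
end
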